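/- Fix u ∈ ℝⁿ, h ∈ ℝⁿ, symmetric H ∈ ℝⁿˣⁿ, and suppose each component [h - Hu]_i ≠ 0 and the approximation ∫_{[-1,1]ⁿ} e^{ũᵀh - ũᵀHu + ½ũᵀHũ} dũ = ∫_{[-1,1]ⁿ} e^{ũᵀh - ũᵀHu} dũ holds exactly (Assumption on negligible quadratic term). Then the log of p(u) := e^{r(u)} / ∫_{[-1,1]ⁿ} e^{r(u)+(ũ-u)ᵀh+½(ũ-u)ᵀH(ũ-u)} dũ equals -½uᵀHu + uᵀh + Σ_{i=1}^{n} log([h - Hu]_i / (e^{[h-Hu]_i} - e^{-[h-Hu]_i})), provided each factor [h-Hu]_i/(e^{[h-Hu]_i}-e^{-[h-Hu]_i}) and e^{-½uᵀHu + uᵀh} are positive. -/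

import Mathlib

/-!
Expanding the quadratic form around `u` (this is where symmetry of `H` enters) splits off the
constant factor `exp (r - uᵀh + ½ uᵀHu)`. By the approximation hypothesis the remaining integrand
is `exp (ũᵀa)` with `a = h - Hu`, which factors over the coordinates of the cube, and
`∫_{-1}^{1} exp (a t) dt = (exp a - exp (-a)) / a`.
-/
open MeasureTheory Matrix

theorem setIntegral_univ_pi_prod {ι : Type*} [Fintype ι] {E : ι → Type*}
    [∀ i, MeasureSpace (E i)] [∀ i, SigmaFinite (volume : Measure (E i))]
    (s : (i : ι) → Set (E i)) (f : (i : ι) → E i → ℝ) :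
    ∫ x in Set.univ.pi s, ∏ i, f i (x i) = ∏ i, ∫ t in s i, f i t := by
  rw [volume_pi, Measure.restrict_pi_pi, integral_fintype_prod_eq_prod]

theorem integral_Icc_exp_mul {c : ℝ} (hc : c ≠ 0) (a b : ℝ) (hab : a ≤ b) :
    ∫ t in Set.Icc a b, Real.exp (c * t) = (Real.exp (c * b) - Real.exp (c * a)) / c := by
  rw [integral_Icc_eq_integral_Ioc, ← intervalIntegral.integral_of_le hab,
    intervalIntegral.integral_comp_mul_left (fun t => Real.exp t) hc, integral_exp, smul_eq_mul,
    inv_mul_eq_div]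

theorem exp_sub_exp_neg_div_pos {a : ℝ} (ha : a ≠ 0) : 0 < (Real.exp a - Real.exp (-a)) / a := by
  rcases ha.lt_or_gt with ha | ha
  · exact div_pos_of_neg_of_neg (by simpa using Real.exp_lt_exp.2 (by linarith : a < -a)) ha
  · exact div_pos (by simpa using Real.exp_lt_exp.2 (by linarith : -a < a)) ha

theorem setIntegral_cube_exp_dotProduct {ι : Type*} [Fintype ι] {a : ι → ℝ} (ha : ∀ i, a i ≠ 0) :
    ∫ x in Set.univ.pi (fun _ : ι => Set.Icc (-1 : ℝ) 1), Real.exp (x ⬝ᵥ a) =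
      ∏ i, (Real.exp (a i) - Real.exp (-a i)) / a i := by
  simp_rw [dotProduct, Real.exp_sum, setIntegral_univ_pi_prod (fun _ => Set.Icc (-1 : ℝ) 1)
    (fun i t => Real.exp (t * a i))]
  refine Finset.prod_congr rfl fun i _ => ?_
  simp_rw [mul_comm _ (a i)]
  rw [integral_Icc_exp_mul (ha i) _ _ (by norm_num), mul_one, mul_neg_one]

theorem Matrix.IsSymm.dotProduct_sub_mulVec_sub {ι : Type*} [Fintype ι] {H : Matrix ι ι ℝ}
    (hH : H.IsSymm) (x u : ι → ℝ) :
    (x - u) ⬝ᵥ (H *ᵥ (x - u)) = x ⬝ᵥ (H *ᵥ x) - 2 * x ⬝ᵥ (H *ᵥ u) + u ⬝ᵥ (H *ᵥ u) := by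
  have hsymm : u ⬝ᵥ (H *ᵥ x) = x ⬝ᵥ (H *ᵥ u) := by
    rw [dotProduct_mulVec, ← mulVec_transpose, hH.eq, dotProduct_comm]
  simp only [sub_dotProduct, dotProduct_sub, mulVec_sub, hsymm]
  ring

theorem stmt10_general (n : ℕ) (u h : Fin n → ℝ)
    (H : Matrix (Fin n) (Fin n) ℝ) (hH : H.IsSymm) (r : ℝ)
    (box : Set (Fin n → ℝ))
    (hbox : box = Set.univ.pi (fun _ : Fin n => Set.Icc (-1 : ℝ) 1))
    (hne : ∀ i, (h - H *ᵥ u) i ≠ 0)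
    (happrox :
      (∫ ut in box,
          Real.exp (ut ⬝ᵥ h - ut ⬝ᵥ (H *ᵥ u) + (1 / 2) * (ut ⬝ᵥ (H *ᵥ ut)))) =
        ∫ ut in box, Real.exp (ut ⬝ᵥ h - ut ⬝ᵥ (H *ᵥ u)))
    (p : ℝ)
    (hp : p = Real.exp r /
        ∫ ut in box,
          Real.exp (r + (ut - u) ⬝ᵥ h +
            (1 / 2) * ((ut - u) ⬝ᵥ (H *ᵥ (ut - u))))) :
    Real.log p =
      -(1 / 2) * (u ⬝ᵥ (H *ᵥ u)) + u ⬝ᵥ h +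
        ∑ i, Real.log ((h - H *ᵥ u) i /
          (Real.exp ((h - H *ᵥ u) i) - Real.exp (-((h - H *ᵥ u) i)))) := by
  set a := h - H *ᵥ u
  set C := r - u ⬝ᵥ h + (1 / 2) * (u ⬝ᵥ (H *ᵥ u))
  have hZ : ∫ ut in box, Real.exp (r + (ut - u) ⬝ᵥ h + (1 / 2) * ((ut - u) ⬝ᵥ (H *ᵥ (ut - u)))) =
      Real.exp C * ∏ i, (Real.exp (a i) - Real.exp (-a i)) / a i := by
    have hexponent : ∀ ut : Fin n → ℝ,
        r + (ut - u) ⬝ᵥ h + (1 / 2) * ((ut - u) ⬝ᵥ (H *ᵥ (ut - u))) =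
          C + (ut ⬝ᵥ h - ut ⬝ᵥ (H *ᵥ u) + (1 / 2) * (ut ⬝ᵥ (H *ᵥ ut))) := fun ut => by
      rw [hH.dotProduct_sub_mulVec_sub, sub_dotProduct]; ring
    simp_rw [hexponent, Real.exp_add C]
    rw [integral_const_mul, happrox, hbox]
    simp_rw [← dotProduct_sub]
    rw [setIntegral_cube_exp_dotProduct hne]
  have hfac : ∀ i, 0 < (Real.exp (a i) - Real.exp (-a i)) / a i :=
    fun i => exp_sub_exp_neg_div_pos (hne i)
  have hprod := Finset.prod_pos fun i (_ : i ∈ Finset.univ) => hfac i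
  rw [hp, hZ, Real.log_div (Real.exp_ne_zero r) (mul_pos (Real.exp_pos C) hprod).ne',
    Real.log_mul (Real.exp_ne_zero C) hprod.ne', Real.log_exp, Real.log_exp,
    Real.log_prod fun i _ => (hfac i).ne']
  simp_rw [← inv_div _ (a _), Real.log_inv, Finset.sum_neg_distrib]
  ring

theorem stmt10 (n : ℕ) (u h : Fin n → ℝ)
    (H : Matrix (Fin n) (Fin n) ℝ) (hH : H.IsSymm) (r : ℝ)
    (box : Set (Fin n → ℝ))
    (hbox : box = Set.univ.pi (fun _ : Fin n => Set.Icc (-1 : ℝ) 1))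
    (hne : ∀ i, (h - H *ᵥ u) i ≠ 0)
    (happrox :
      (∫ ut in box,
          Real.exp (ut ⬝ᵥ h - ut ⬝ᵥ (H *ᵥ u) + (1 / 2) * (ut ⬝ᵥ (H *ᵥ ut)))) =
        ∫ ut in box, Real.exp (ut ⬝ᵥ h - ut ⬝ᵥ (H *ᵥ u)))
    (hposfac : ∀ i, 0 < (h - H *ᵥ u) i /
        (Real.exp ((h - H *ᵥ u) i) - Real.exp (-((h - H *ᵥ u) i))))
    (hpos : 0 < Real.exp (-(1 / 2) * (u ⬝ᵥ (H *ᵥ u)) + u ⬝ᵥ h))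
    (p : ℝ)
    (hp : p = Real.exp r /
        ∫ ut in box,
          Real.exp (r + (ut - u) ⬝ᵥ h +
            (1 / 2) * ((ut - u) ⬝ᵥ (H *ᵥ (ut - u))))) :
    Real.log p =
      -(1 / 2) * (u ⬝ᵥ (H *ᵥ u)) + u ⬝ᵥ h +
        ∑ i, Real.log ((h - H *ᵥ u) i /
          (Real.exp ((h - H *ᵥ u) i) - Real.exp (-((h - H *ᵥ u) i)))) :=
  stmt10_general n u h H hH r box hbox hne happrox p hp
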